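/- Fix ρ > 0 and d₁ ∈ [0, g(0,0,N₁;ρ)] with σN₁d₁ ≤ φD. Then the derivative of ρ' ↦ g(d₁,N₁,N₂;ρ') at ρ is nonnegative if and only if −σ²N₁(N₁+N₂)d₁² + 2φDN₁σd₁ + (N₂/T − 1)φ²D² ≥ 0; in particular, this sign condition does not depend on ρ. -/

import Mathlib

/-- `B(d,N;ρ)` with parameters `σ φ D T`. -/
noncomputable def B (σ φ D T ρ N d : ℝ) : ℝ :=
  φ * D * (1 + ρ * φ * D / T) - σ * N * d - ρ * σ ^ 2 * N * d ^ 2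

/-- `g(d,N',N;ρ)` with parameters `σ φ D T`. -/
noncomputable def g (σ φ D T ρ N' N d : ℝ) : ℝ :=
  (-1 + Real.sqrt (1 + (4 * ρ / N) * B σ φ D T ρ N' d)) / (2 * σ * ρ)

/-- `f(d₁,N₂;ρ,τ)` with parameters `σ φ D T` and `N₁`. -/
noncomputable def f (σ φ D T ρ τ N₁ N₂ d₁ : ℝ) : ℝ :=
  N₁ * d₁ + N₂ * g σ φ D T ρ N₁ N₂ d₁ +
    τ * (N₁ * d₁ ^ 2 + N₂ * (g σ φ D T ρ N₁ N₂ d₁) ^ 2)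

/-!
As a function of `ρ`, `B(d₁,N₁;ρ) = a + cρ` is affine, with `a = φD − σN₁d₁ ≥ 0` and
`c = φ²D²/T − σ²N₁d₁²`, so `g(d₁,N₁,N₂;ρ) = (√p(ρ) − 1)/(2σρ)` with `p(ρ) = 1 + 4ρ(a + cρ)/N₂`.
The quotient rule gives `g' = (√p − 1 − 2aρ/N₂) / (2σρ²√p)`, and squaring shows that
`√p ≥ 1 + 2aρ/N₂` exactly when `N₂c − a² ≥ 0`; the latter is the stated polynomial in `d₁`.
The hypothesis `d₁ ≤ g(0,0,N₁;ρ)` is what makes `p(ρ) ≥ 1`, so that `√·` is differentiable there.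
-/

open Real

noncomputable def sqrtQuot (σ n a c x : ℝ) : ℝ :=
  (-1 + √(1 + 4 * x / n * (a + c * x))) / (2 * σ * x)

lemma B_eq_add_mul (σ φ D T ρ N d : ℝ) :
    B σ φ D T ρ N d = (φ * D - σ * N * d) + (φ ^ 2 * D ^ 2 / T - σ ^ 2 * N * d ^ 2) * ρ := by
  rw [B]; ring

lemma g_eq_sqrtQuot (σ φ D T ρ N' N d : ℝ) :
    g σ φ D T ρ N' N d =
      sqrtQuot σ N (φ * D - σ * N' * d) (φ ^ 2 * D ^ 2 / T - σ ^ 2 * N' * d ^ 2) ρ := by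
  rw [g, sqrtQuot, B_eq_add_mul]

lemma B_nonneg_of_mem_Icc {σ φ D T ρ N d : ℝ} (hσ : 0 < σ) (hρ : 0 < ρ) (hN : 0 < N)
    (hd : d ∈ Set.Icc 0 (g σ φ D T ρ 0 N 0)) : 0 ≤ B σ φ D T ρ N d := by
  obtain ⟨hd0, hdg⟩ := hd
  have hB₀ : B σ φ D T ρ 0 0 = B σ φ D T ρ N d + σ * N * d + ρ * σ ^ 2 * N * d ^ 2 := by
    simp only [B]; ring
  rw [g, hB₀, le_div_iff₀ (by positivity)] at hdg
  have hsq : (2 * σ * ρ * d + 1) ^ 2 ≤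
      1 + 4 * ρ / N * (B σ φ D T ρ N d + σ * N * d + ρ * σ ^ 2 * N * d ^ 2) :=
    (le_sqrt' (by positivity)).mp (by linarith)
  have key : 1 + 4 * ρ / N * (B σ φ D T ρ N d + σ * N * d + ρ * σ ^ 2 * N * d ^ 2) =
      (2 * σ * ρ * d + 1) ^ 2 + 4 * ρ / N * B σ φ D T ρ N d := by
    field_simp; ring
  exact nonneg_of_mul_nonneg_right (by linarith) (by positivity)

section SqrtQuot

variable {σ n a c x : ℝ}

lemma hasDerivAt_sqrtQuot (hσ : σ ≠ 0) (hn : n ≠ 0) (hx : x ≠ 0)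
    (hp : 0 < 1 + 4 * x / n * (a + c * x)) :
    HasDerivAt (sqrtQuot σ n a c)
      ((√(1 + 4 * x / n * (a + c * x)) - 1 - 2 * a * x / n) /
        (2 * σ * x ^ 2 * √(1 + 4 * x / n * (a + c * x)))) x := by
  set p := 1 + 4 * x / n * (a + c * x) with hp_def
  have hpoly : HasDerivAt (fun y => 1 + 4 * y / n * (a + c * y)) (4 * (a + 2 * c * x) / n) x := by
    have := (((hasDerivAt_id x).const_mul (4 / n)).fun_mul
      (((hasDerivAt_id x).const_mul c).const_add a)).const_add 1
    rw [show (fun y => 1 + 4 * y / n * (a + c * y)) = fun y => 1 + 4 / n * id y * (a + c * id y) by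
      funext y; simp only [id]; ring]
    exact this.congr_deriv (by simp only [id]; field_simp; ring)
  have hquot := ((hpoly.sqrt hp.ne').const_add (-1)).fun_div
    ((hasDerivAt_id' x).const_mul (2 * σ)) (by simp [hσ, hx])
  refine hquot.congr_deriv ?_
  have hsqrt : √p ^ 2 = p := sq_sqrt hp.le
  have hsqrt_pos : 0 < √p := sqrt_pos.mpr hp
  rw [← hp_def, div_eq_div_iff (by positivity) (by positivity)]
  have hnp : n * p = n + 4 * x * (a + c * x) := by rw [hp_def]; field_simp
  field_simp
  linear_combination (-2 * n) * hsqrt - 2 * hnp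

lemma one_add_le_sqrt_iff (hn : 0 < n) (hx : x ≠ 0) (h : 0 < 1 + 2 * a * x / n) :
    1 + 2 * a * x / n ≤ √(1 + 4 * x / n * (a + c * x)) ↔ a ^ 2 ≤ n * c := by
  rw [le_sqrt' h, ← sub_nonneg, ← sub_nonneg (b := a ^ 2)]
  have key : 1 + 4 * x / n * (a + c * x) - (1 + 2 * a * x / n) ^ 2 =
      4 * x ^ 2 / n ^ 2 * (n * c - a ^ 2) := by
    field_simp; ring
  rw [key]
  exact ⟨fun h' => nonneg_of_mul_nonneg_right h' (by positivity), fun h' => by positivity⟩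

lemma deriv_sqrtQuot_nonneg_iff (hσ : 0 < σ) (hn : 0 < n) (hx : 0 < x) (ha : 0 ≤ a)
    (hB : 0 ≤ a + c * x) : 0 ≤ deriv (sqrtQuot σ n a c) x ↔ a ^ 2 ≤ n * c := by
  have hp : 1 ≤ 1 + 4 * x / n * (a + c * x) := le_add_of_nonneg_right (by positivity)
  rw [(hasDerivAt_sqrtQuot hσ.ne' hn.ne' hx.ne' (by linarith)).deriv,
    le_div_iff₀ (by positivity), zero_mul, sub_sub, sub_nonneg,
    one_add_le_sqrt_iff hn hx.ne' (by positivity)]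

end SqrtQuot

theorem stmt_16_general (σ φ D T : ℝ) (hσ : 0 < σ)
    (N₁ N₂ : ℕ) (hN₁ : 0 < N₁) (hN₂ : 0 < N₂)
    (ρ : ℝ) (hρ : 0 < ρ)
    (d₁ : ℝ) (hd₁ : d₁ ∈ Set.Icc 0 (g σ φ D T ρ 0 N₁ 0))
    (hdose : σ * N₁ * d₁ ≤ φ * D) :
    0 ≤ deriv (fun ρ' => g σ φ D T ρ' N₁ N₂ d₁) ρ ↔
      0 ≤ -σ ^ 2 * N₁ * ((N₁ : ℝ) + N₂) * d₁ ^ 2 + 2 * φ * D * N₁ * σ * d₁ +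
        ((N₂ : ℝ) / T - 1) * φ ^ 2 * D ^ 2 := by
  have hB := B_nonneg_of_mem_Icc hσ hρ (Nat.cast_pos.mpr hN₁) hd₁
  rw [B_eq_add_mul] at hB
  simp only [g_eq_sqrtQuot]
  rw [deriv_sqrtQuot_nonneg_iff hσ (Nat.cast_pos.mpr hN₂) hρ (sub_nonneg.mpr hdose) hB,
    ← sub_nonneg]
  ring_nf

/-- the derivative of `ρ' ↦ g(d₁,N₁,N₂;ρ')` at `ρ` is nonnegative iff
`−σ²N₁(N₁+N₂)d₁² + 2φDN₁σd₁ + (N₂/T − 1)φ²D² ≥ 0`, a condition independent of `ρ`. -/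
theorem stmt_16 (σ φ D T : ℝ) (hσ : 0 < σ) (hφ : 0 < φ) (hD : 0 < D) (hT : 0 < T)
    (N₁ N₂ : ℕ) (hN₁ : 0 < N₁) (hN₂ : 0 < N₂)
    (ρ : ℝ) (hρ : 0 < ρ)
    (d₁ : ℝ) (hd₁ : d₁ ∈ Set.Icc 0 (g σ φ D T ρ 0 N₁ 0))
    (hdose : σ * N₁ * d₁ ≤ φ * D) :
    0 ≤ deriv (fun ρ' => g σ φ D T ρ' N₁ N₂ d₁) ρ ↔
      0 ≤ -σ ^ 2 * N₁ * ((N₁ : ℝ) + N₂) * d₁ ^ 2 + 2 * φ * D * N₁ * σ * d₁ +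
        ((N₂ : ℝ) / T - 1) * φ ^ 2 * D ^ 2 :=
  stmt_16_general σ φ D T hσ N₁ N₂ hN₁ hN₂ ρ hρ d₁ hd₁ hdose
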